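/- Suppose a sequence of continuous functions dₙ on the closed second quadrant D̄₂, analytic in the interior, converges uniformly on D̄₂ to a function d, each dₙ is nonvanishing on D̄₂, d is nonvanishing on ∂D₂, and dₙ(k), d(k) → 1 uniformly as |k| → ∞. Then d is nonvanishing on all of D̄₂. -/

import Mathlib

/-- The closed second quadrant. -/
def closedD2 : Set ℂ := {k : ℂ | k.re ≤ 0 ∧ 0 ≤ k.im}

/-- The open second quadrant. -/
def openD2 : Set ℂ := {k : ℂ | k.re < 0 ∧ 0 < k.im}

/-- The boundary of the second quadrant. -/
def bdryD2 : Set ℂ := {k : ℂ | (k.im = 0 ∧ k.re ≤ 0) ∨ (k.re = 0 ∧ 0 ≤ k.im)}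

/-!
By Weierstrass the limit `d` is holomorphic in the open quadrant. Hurwitz's theorem: if `d` had
a zero there, it could not be isolated, for on a small circle around it `|d| ≥ m > 0`, so
`|dₙ| > m/2` on the circle for large `n`, and the minimum modulus principle for the zero-free
`dₙ` gives `|dₙ(k₀)| ≥ m/2`, whereas `dₙ(k₀) → d(k₀) = 0`. Hence `d` would vanish on the whole
(connected) open quadrant, contradicting `d → 1` at infinity.
-/

open Set Filter Topology Metric

lemma exists_closedBall_subset_forall_mem_sphere {E : Type*} [NormedAddCommGroup E]
    {s : Set E} {p : E → Prop} {z₀ : E} (hs : s ∈ 𝓝 z₀) (hp : ∀ᶠ z in 𝓝[≠] z₀, p z) :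
    ∃ r > 0, closedBall z₀ r ⊆ s ∧ ∀ z ∈ sphere z₀ r, p z := by
  obtain ⟨ε, hε, hball⟩ := Metric.eventually_nhds_iff.mp
    ((eventually_nhdsWithin_iff.mp hp).and hs)
  refine ⟨ε / 2, half_pos hε, fun z hz => (hball ?_).2, fun z hz => (hball ?_).1 ?_⟩
  · exact (mem_closedBall.mp hz).trans_lt (half_lt_self hε)
  · exact (mem_sphere.mp hz).trans_lt (half_lt_self hε)
  · exact ne_of_mem_sphere hz (half_pos hε).ne'

lemma IsCompact.exists_pos_forall_le_norm {E : Type*} [TopologicalSpace E] {K : Set E}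
    {g : E → ℂ} (hK : IsCompact K) (hg : ContinuousOn g K) (hg0 : ∀ z ∈ K, g z ≠ 0) :
    ∃ m > 0, ∀ z ∈ K, m ≤ ‖g z‖ := by
  rcases K.eq_empty_or_nonempty with rfl | hne
  · exact ⟨1, one_pos, by simp⟩
  obtain ⟨z₁, hz₁, hmin⟩ := hK.exists_isMinOn hne hg.norm
  exact ⟨‖g z₁‖, norm_pos_iff.mpr (hg0 z₁ hz₁), fun z hz => hmin hz⟩

theorem Complex.le_norm_of_forall_mem_frontier_le_norm {E : Type*} [NormedAddCommGroup E]
    [NormedSpace ℂ E] [Nontrivial E] {g : E → ℂ} {U : Set E} (hU : Bornology.IsBounded U)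
    (hd : DiffContOnCl ℂ g U) (hg0 : ∀ z ∈ closure U, g z ≠ 0) {c : ℝ}
    (hc : ∀ z ∈ frontier U, c ≤ ‖g z‖) {z : E} (hz : z ∈ closure U) : c ≤ ‖g z‖ := by
  rcases le_or_gt c 0 with hc0 | hc0
  · exact hc0.trans (norm_nonneg _)
  have hinv : DiffContOnCl ℂ g⁻¹ U :=
    ⟨hd.differentiableOn.inv fun z hz => hg0 z (subset_closure hz), hd.continuousOn.inv₀ hg0⟩
  have hbound : ∀ w ∈ frontier U, ‖g⁻¹ w‖ ≤ c⁻¹ := fun w hw => by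
    rw [Pi.inv_apply, norm_inv]
    exact inv_anti₀ hc0 (hc w hw)
  have := Complex.norm_le_of_forall_mem_frontier_norm_le hU hinv hbound hz
  rw [Pi.inv_apply, norm_inv] at this
  exact (inv_le_inv₀ (norm_pos_iff.mpr (hg0 z hz)) hc0).mp this

section Hurwitz

variable {ι : Type*} {φ : Filter ι} {F : ι → ℂ → ℂ} {f : ℂ → ℂ} {U : Set ℂ}

theorem TendstoLocallyUniformlyOn.eventually_eq_zero_of_ne_zero [φ.NeBot]
    (hf : TendstoLocallyUniformlyOn F f φ U) (hF : ∀ᶠ n in φ, DifferentiableOn ℂ (F n) U)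
    (hF0 : ∀ᶠ n in φ, ∀ z ∈ U, F n z ≠ 0) (hU : IsOpen U) {z₀ : ℂ} (hz₀ : z₀ ∈ U)
    (hfz₀ : f z₀ = 0) : f =ᶠ[𝓝 z₀] 0 := by
  have hfd : DifferentiableOn ℂ f U := hf.differentiableOn hF hU
  by_contra hnot
  have hisol : ∀ᶠ z in 𝓝[≠] z₀, f z ≠ 0 :=
    ((hfd.analyticAt (hU.mem_nhds hz₀)).eventually_eq_zero_or_eventually_ne_zero).resolve_left
      hnot
  obtain ⟨r, hr, hballU, hsphere⟩ :=
    exists_closedBall_subset_forall_mem_sphere (hU.mem_nhds hz₀) hisol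
  have hsphereU : sphere z₀ r ⊆ U := sphere_subset_closedBall.trans hballU
  obtain ⟨m, hm, hfm⟩ := (isCompact_sphere z₀ r).exists_pos_forall_le_norm
    (hfd.continuousOn.mono hsphereU) hsphere
  have hunif : ∀ᶠ n in φ, ∀ z ∈ closedBall z₀ r, dist (f z) (F n z) < m / 2 :=
    Metric.tendstoUniformlyOn_iff.mp
      ((tendstoLocallyUniformlyOn_iff_forall_isCompact hU).mp hf _ hballU
        (isCompact_closedBall z₀ r)) _ (half_pos hm)
  obtain ⟨n, hFd, hFn0, hclose⟩ := (hF.and (hF0.and hunif)).exists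
  have hFm : ∀ z ∈ sphere z₀ r, m / 2 ≤ ‖F n z‖ := fun z hz => by
    have h1 := hclose z (sphere_subset_closedBall hz)
    have h2 := norm_sub_norm_le (f z) (F n z)
    rw [dist_eq_norm] at h1
    linarith [hfm z hz]
  have hcenter : m / 2 ≤ ‖F n z₀‖ := by
    refine Complex.le_norm_of_forall_mem_frontier_le_norm isBounded_ball
      (hFd.mono (closure_ball z₀ hr.ne' ▸ hballU)).diffContOnCl (fun z hz => hFn0 z ?_) ?_
      (subset_closure (mem_ball_self hr))
    · exact hballU (closure_ball z₀ hr.ne' ▸ hz)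
    · rwa [frontier_ball z₀ hr.ne']
  have := hclose z₀ (mem_closedBall_self hr.le)
  rw [dist_eq_norm, hfz₀, zero_sub, norm_neg] at this
  linarith

theorem TendstoLocallyUniformlyOn.eqOn_zero_of_ne_zero [φ.NeBot]
    (hf : TendstoLocallyUniformlyOn F f φ U) (hF : ∀ᶠ n in φ, DifferentiableOn ℂ (F n) U)
    (hF0 : ∀ᶠ n in φ, ∀ z ∈ U, F n z ≠ 0) (hU : IsOpen U) (hU' : IsPreconnected U) {z₀ : ℂ}
    (hz₀ : z₀ ∈ U) (hfz₀ : f z₀ = 0) : EqOn f 0 U :=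
  ((hf.differentiableOn hF hU).analyticOnNhd hU).eqOn_zero_of_preconnected_of_eventuallyEq_zero
    hU' hz₀ (hf.eventually_eq_zero_of_ne_zero hF hF0 hU hz₀ hfz₀)

end Hurwitz

lemma isOpen_openD2 : IsOpen openD2 :=
  (isOpen_lt Complex.continuous_re continuous_const).inter
    (isOpen_lt continuous_const Complex.continuous_im)

lemma isPreconnected_openD2 : IsPreconnected openD2 :=
  ((convex_halfSpace_re_lt 0).inter (convex_halfSpace_im_gt 0)).isPreconnected

lemma openD2_subset_closedD2 : openD2 ⊆ closedD2 :=
  fun _ hk => ⟨hk.1.le, hk.2.le⟩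

lemma mem_openD2_of_mem_closedD2 {k : ℂ} (hk : k ∈ closedD2) (hb : k ∉ bdryD2) :
    k ∈ openD2 := by
  rcases hk.1.lt_or_eq with hre | hre
  · rcases hk.2.lt_or_eq with him | him
    · exact ⟨hre, him⟩
    · exact absurd (Or.inl ⟨him.symm, hk.1⟩) hb
  · exact absurd (Or.inr ⟨hre, hk.2⟩) hb

lemma exists_mem_openD2_le_norm (R : ℝ) : ∃ z ∈ openD2, R ≤ ‖z‖ := by
  have ht : 0 < |R| + 1 := by positivity
  refine ⟨⟨-(|R| + 1), |R| + 1⟩, ⟨neg_neg_of_pos ht, ht⟩, ?_⟩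
  calc R ≤ |R| + 1 := (le_abs_self R).trans (le_add_of_nonneg_right zero_le_one)
    _ = |(⟨-(|R| + 1), |R| + 1⟩ : ℂ).im| := (abs_of_pos ht).symm
    _ ≤ _ := Complex.abs_im_le_norm _

theorem hurwitz_type_sector_general
    (dn : ℕ → ℂ → ℂ) (d : ℂ → ℂ)
    (hdn_anal : ∀ n, DifferentiableOn ℂ (dn n) openD2)
    (hconv : TendstoUniformlyOn dn d Filter.atTop closedD2)
    (hdn_nz : ∀ n, ∀ k ∈ closedD2, dn n k ≠ 0)
    (hd_bd : ∀ k ∈ bdryD2, d k ≠ 0)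
    (hlim : ∀ ε > 0, ∃ R, ∀ k ∈ closedD2, R ≤ ‖k‖ →
      ‖d k - 1‖ < ε ∧ ∀ n, ‖dn n k - 1‖ < ε) :
    ∀ k ∈ closedD2, d k ≠ 0 := by
  intro k hk hdk
  have hkU : k ∈ openD2 := mem_openD2_of_mem_closedD2 hk fun hb => hd_bd k hb hdk
  have hd0 : EqOn d 0 openD2 :=
    (hconv.mono openD2_subset_closedD2).tendstoLocallyUniformlyOn.eqOn_zero_of_ne_zero
      (Eventually.of_forall hdn_anal)
      (Eventually.of_forall fun n z hz => hdn_nz n z (openD2_subset_closedD2 hz))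
      isOpen_openD2 isPreconnected_openD2 hkU hdk
  obtain ⟨R, hR⟩ := hlim 1 one_pos
  obtain ⟨z, hz, hRz⟩ := exists_mem_openD2_le_norm R
  have hdz := (hR z (openD2_subset_closedD2 hz) hRz).1
  simp [hd0 hz] at hdz

theorem hurwitz_type_sector
    (dn : ℕ → ℂ → ℂ) (d : ℂ → ℂ)
    (hdn_cont : ∀ n, ContinuousOn (dn n) closedD2)
    (hdn_anal : ∀ n, DifferentiableOn ℂ (dn n) openD2)
    (hd_cont : ContinuousOn d closedD2)
    (hd_anal : DifferentiableOn ℂ d openD2)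
    (hconv : TendstoUniformlyOn dn d Filter.atTop closedD2)
    (hdn_nz : ∀ n, ∀ k ∈ closedD2, dn n k ≠ 0)
    (hd_bd : ∀ k ∈ bdryD2, d k ≠ 0)
    (hlim : ∀ ε > 0, ∃ R, ∀ k ∈ closedD2, R ≤ ‖k‖ →
      ‖d k - 1‖ < ε ∧ ∀ n, ‖dn n k - 1‖ < ε) :
    ∀ k ∈ closedD2, d k ≠ 0 :=
  hurwitz_type_sector_general dn d hdn_anal hconv hdn_nz hd_bd hlim
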